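/- arXiv:1503.07288 — 3 statements merged into one kernel-verified Lean document; each statement's English description precedes it below -/
import Mathlib

section
/- Suppose (B, D) satisfies (I − D)Y = BZ, (B D)·1 = 1 (rows of the concatenated matrix sum to 1), and B, D ≥ 0 entrywise. Let Λ be a nonnegative diagonal matrix and define B′ = ΛB, off(D′) = Λ·off(D), and diag(D′) = 1 − Λ(B·1 + off(D)·1), where off(D) denotes D with its diagonal zeroed out. If diag(D′) ≥ 0, then (B′, D′) also satisfies (I − D′)Y = B′Z, (B′ D′)·1 = 1, and B′, D′ ≥ 0. -/
open Matrix

/-- `off M` is `M` with its diagonal zeroed out. -/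
def offDiag' {p : ℕ} (M : Matrix (Fin p) (Fin p) ℝ) : Matrix (Fin p) (Fin p) ℝ :=
  Matrix.of fun i j => if i = j then 0 else M i j

/-- Scaling ambiguity: if `(B, D)` satisfies `(I − D)Y = BZ`, row-stochasticity of
`(B D)` and nonnegativity, and `(B′, D′)` is obtained via a nonnegative diagonal
scaling `Λ` with `B′ = ΛB`, `off(D′) = Λ·off(D)`,
`diag(D′) = 1 − Λ(B·1 + off(D)·1) ≥ 0`, then `(B′, D′)` satisfies the same system. -/
theorem stmt2 (p q r : ℕ)
    (B B' : Matrix (Fin p) (Fin q) ℝ) (D D' : Matrix (Fin p) (Fin p) ℝ)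
    (Y : Matrix (Fin p) (Fin r) ℝ) (Z : Matrix (Fin q) (Fin r) ℝ)
    (hsys : (1 - D) * Y = B * Z)
    (hrow : ∀ i, (∑ j, B i j) + (∑ j, D i j) = 1)
    (hBpos : ∀ i j, 0 ≤ B i j) (hDpos : ∀ i j, 0 ≤ D i j)
    (l : Fin p → ℝ) (hl : ∀ i, 0 ≤ l i)
    (hB' : B' = Matrix.diagonal l * B)
    (hoff : offDiag' D' = Matrix.diagonal l * offDiag' D)
    (hdiag : ∀ i, D' i i = 1 - l i * ((∑ j, B i j) + (∑ j, offDiag' D i j)))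
    (hdiagpos : ∀ i, 0 ≤ D' i i) :
    (1 - D') * Y = B' * Z ∧
    (∀ i, (∑ j, B' i j) + (∑ j, D' i j) = 1) ∧
    (∀ i j, 0 ≤ B' i j) ∧ (∀ i j, 0 ≤ D' i j) := by
  have hoffsum : ∀ i, (∑ j, offDiag' D i j) = (∑ j, D i j) - D i i := by
    intro i
    have : ∀ j, offDiag' D i j = D i j - (if i = j then D i j else 0) := by
      intro j; simp only [offDiag', Matrix.of_apply]; split_ifs <;> ring
    simp only [this, Finset.sum_sub_distrib, Finset.sum_ite_eq, Finset.mem_univ, if_true]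
  have hD'off : ∀ i j, i ≠ j → D' i j = l i * D i j := by
    intro i j h
    have := congrFun (congrFun hoff i) j
    simpa [offDiag', Matrix.diagonal_mul, h] using this
  have hD'ii : ∀ i, D' i i = 1 - l i + l i * D i i := by
    intro i
    have h1 := hrow i
    rw [hdiag i, hoffsum i]
    have : (∑ j, B i j) = 1 - ∑ j, D i j := by linarith
    rw [this]; ring
  have hD'eq : ∀ i j, D' i j = l i * D i j + (if i = j then 1 - l i else 0) := by
    intro i j
    by_cases h : i = j
    · subst h; rw [hD'ii i]; simp; ring
    · simp [h, hD'off i j h]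
  have hB'eq : ∀ i j, B' i j = l i * B i j := by
    intro i j; rw [hB']; simp [Matrix.mul_apply, Matrix.diagonal, Finset.sum_ite_eq]
  refine ⟨?_, ?_, ?_, ?_⟩
  · have hone : ∀ (M : Matrix (Fin p) (Fin p) ℝ) i k,
        (∑ x, ((1 : Matrix (Fin p) (Fin p) ℝ) i x - M i x) * Y x k)
          = Y i k - ∑ x, M i x * Y x k := by
      intro M i k
      simp [sub_mul, Finset.sum_sub_distrib, Matrix.one_apply, ite_mul, Finset.sum_ite_eq]
    ext i k
    have hs := congrFun (congrFun hsys i) k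
    simp only [Matrix.sub_apply, Matrix.mul_apply] at hs ⊢
    rw [hone] at hs ⊢
    have hsum : (∑ j, D' i j * Y j k)
        = (∑ j, l i * D i j * Y j k) + (1 - l i) * Y i k := by
      have : ∀ j, D' i j * Y j k
          = l i * D i j * Y j k + (if i = j then (1 - l i) * Y j k else 0) := by
        intro j; rw [hD'eq i j]; split_ifs <;> ring
      simp only [this, Finset.sum_add_distrib, Finset.sum_ite_eq, Finset.mem_univ, if_true]
    rw [hsum]
    have h2 : (∑ j, l i * D i j * Y j k) = l i * ∑ j, D i j * Y j k := by
      rw [Finset.mul_sum]; congr 1; ext j; ring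
    have h3 : (∑ j, B' i j * Z j k) = l i * ∑ j, B i j * Z j k := by
      rw [Finset.mul_sum]; apply Finset.sum_congr rfl; intro j _; rw [hB'eq i j]; ring
    rw [h2, h3, ← hs]; ring
  · intro i
    have hDsum : (∑ j, D' i j) = l i * (∑ j, D i j) + (1 - l i) := by
      simp only [hD'eq, Finset.sum_add_distrib, Finset.sum_ite_eq, Finset.mem_univ, if_true,
        Finset.mul_sum]
    have hBsum : (∑ j, B' i j) = l i * (∑ j, B i j) := by
      simp only [hB'eq, Finset.mul_sum]
    rw [hDsum, hBsum]
    linear_combination l i * hrow i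
  · intro i j; rw [hB'eq i j]; exact mul_nonneg (hl i) (hBpos i j)
  · intro i j
    by_cases h : i = j
    · subst h; exact hdiagpos i
    · rw [hD'off i j h]; exact mul_nonneg (hl i) (hDpos i j)
end

section
/- The relative trust weights are invariant under the scaling equivalence: if (B′, D′) is obtained from (B, D) via B′ = ΛB, off(D′) = Λ·off(D), diag(D′) = 1 − Λ(B·1 + off(D)·1) for a nonnegative diagonal Λ with diag(D′) ≥ 0, and if 1 − D_{ii} > 0 and 1 − D′_{ii} > 0 for all i, then for all i ≠ j, D′_{ij}/(1 − D′_{ii}) = D_{ij}/(1 − D_{ii}) and B′_{ij}/(1 − D′_{ii}) = B_{ij}/(1 − D_{ii}). -/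
open Matrix

/-- The relative trust weights `D_{ij}/(1 − D_{ii})` and `B_{ij}/(1 − D_{ii})` are
invariant under the scaling equivalence `B′ = ΛB`, `off(D′) = Λ·off(D)`,
`diag(D′) = 1 − Λ(B·1 + off(D)·1)`, for nonnegative diagonal `Λ`, provided
`1 − D_{ii} > 0` and `1 − D′_{ii} > 0` for all `i`. -/
theorem stmt4 (p q : ℕ)
    (B B' : Matrix (Fin p) (Fin q) ℝ) (D D' : Matrix (Fin p) (Fin p) ℝ)
    (hrow : ∀ i, (∑ j, B i j) + (∑ j, D i j) = 1)
    (hBpos : ∀ i j, 0 ≤ B i j) (hDpos : ∀ i j, 0 ≤ D i j)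
    (l : Fin p → ℝ) (hl : ∀ i, 0 ≤ l i)
    (hB' : B' = Matrix.diagonal l * B)
    (hoff : offDiag' D' = Matrix.diagonal l * offDiag' D)
    (hdiag : ∀ i, D' i i = 1 - l i * ((∑ j, B i j) + (∑ j, offDiag' D i j)))
    (hd'pos : ∀ i, 0 ≤ D' i i)
    (hpos : ∀ i, 0 < 1 - D i i) (hpos' : ∀ i, 0 < 1 - D' i i) :
    (∀ i j, i ≠ j → D' i j / (1 - D' i i) = D i j / (1 - D i i)) ∧
    (∀ i j, B' i j / (1 - D' i i) = B i j / (1 - D i i)) := by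
  -- Row sum of offDiag'
  have hsum : ∀ i, (∑ j, offDiag' D i j) = (∑ j, D i j) - D i i := by
    intro i
    have : (∑ j, offDiag' D i j) = ∑ j, (D i j - if i = j then D i j else 0) := by
      apply Finset.sum_congr rfl
      intro j _
      simp [offDiag']
      split <;> simp_all
    rw [this, Finset.sum_sub_distrib]
    simp
  have hkey : ∀ i, 1 - D' i i = l i * (1 - D i i) := by
    intro i
    rw [hdiag i, hsum i]
    linear_combination l i * hrow i
  have hlpos : ∀ i, 0 < l i := by
    intro i
    have h1 := hpos' i
    rw [hkey i] at h1
    rcases mul_pos_iff.mp h1 with ⟨h, _⟩ | ⟨_, h2⟩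
    · exact h
    · linarith [hpos i]
  refine ⟨fun i j hij => ?_, fun i j => ?_⟩
  · have hD' : D' i j = l i * D i j := by
      have := congrFun (congrFun hoff i) j
      simpa [offDiag', Matrix.diagonal_mul, hij] using this
    rw [hD', hkey i, mul_div_mul_left _ _ (ne_of_gt (hlpos i))]
  · have hB'ij : B' i j = l i * B i j := by
      rw [hB']
      simp [Matrix.diagonal_mul]
    rw [hB'ij, hkey i, mul_div_mul_left _ _ (ne_of_gt (hlpos i))]
end

section
/- Let Φ(0,t) = W(t)⋯W(0) be products of i.i.d. random row-stochastic matrices with stubborn block structure, mean W̄, and λ = ‖D̄‖₂ < 1, and let W̄^∞ = lim_k W̄^k. For t_j > t_i, E[(Φ(0,t_j) − W̄^∞)ᵀ(Φ(0,t_i) − W̄^∞)] = E[(Φ(0,t_i) − W̄^∞)ᵀ (W̄^{t_j − t_i} − W̄^∞)(Φ(0,t_i) − W̄^∞)] + R where the correction from Φ(0,t_i)ᵀ W̄^∞ terms vanishes by W̄^∞W̄^ℓ = W̄^∞; consequently ‖E[(Φ(0,t_j) − W̄^∞)ᵀ(Φ(0,t_i) − W̄^∞)]‖ ≤ C λ^{t_j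 − t_i} for a constant C < ∞. -/
/-!
Write `Φᵢ = Φ(0, tᵢ)` and `Ψ = Φ(tᵢ + 1, tⱼ)`, so that `Φ(0, tⱼ) = Ψ Φᵢ` with `Ψ` independent of
`Φᵢ` and `E[Ψ] = W̄ᵐ`, `m = tⱼ - tᵢ`. The matrix `W̄^∞ = [[I, 0], [X, 0]]`, `X = (I - D̄)⁻¹ B̄`,
absorbs every `[[I, 0], [B, D]]` from the right, so `W̄^∞ Φᵢ = W̄^∞` and
`Φ(0, tⱼ) - W̄^∞ = (Ψ - W̄^∞) Φᵢ`. Averaging over `Ψ` first turns the cross term into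
`E[Φᵢᵀ (W̄ᵐ - W̄^∞)ᵀ (Φᵢ - W̄^∞)]`. Since `B̄ + D̄ X = X`, we have
`W̄ᵐ - W̄^∞ = [[0, 0], [-D̄ᵐ X, D̄ᵐ]]`, whose entries are at most `λᵐ (‖X‖ + 1)`, while all entries
of `Φᵢ` lie in `[0, 1]`.
-/

open scoped Matrix.Norms.L2Operator
open Matrix Filter MeasureTheory ProbabilityTheory

instance matrixMS (m n : Type*) : MeasurableSpace (Matrix m n ℝ) := MeasurableSpace.pi

/-- The backward product `Φ(s, s+k) = W(s+k) ⋯ W(s+1) W(s)`. -/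
def prodSeq {I : Type*} [Fintype I] (W : ℕ → Matrix I I ℝ) (s : ℕ) : ℕ → Matrix I I ℝ
  | 0 => W s
  | k + 1 => W (s + k + 1) * prodSeq W s k

theorem Matrix.abs_apply_le_l2_opNorm {m n : Type*} [Fintype m] [Fintype n] [DecidableEq n]
    (A : Matrix m n ℝ) (i : m) (j : n) : |A i j| ≤ ‖A‖ :=
  calc |A i j| = ‖(EuclideanSpace.equiv m ℝ).symm (A *ᵥ EuclideanSpace.single j 1) i‖ := by
        simp [mulVec_single]
    _ ≤ ‖(EuclideanSpace.equiv m ℝ).symm (A *ᵥ EuclideanSpace.single j 1)‖ := PiLp.norm_apply_le _ _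
    _ ≤ ‖A‖ * ‖EuclideanSpace.single j (1 : ℝ)‖ := A.l2_opNorm_mulVec _
    _ = ‖A‖ := by simp

theorem Matrix.abs_mul_apply_le {l m n : Type*} [Fintype m] {A : Matrix l m ℝ}
    {B : Matrix m n ℝ} {a b : ℝ} (hA : ∀ i k, |A i k| ≤ a) (hB : ∀ k j, |B k j| ≤ b) (i : l)
    (j : n) : |(A * B) i j| ≤ Fintype.card m * (a * b) :=
  calc |(A * B) i j| ≤ ∑ k, |A i k * B k j| := Finset.abs_sum_le_sum_abs _ _
    _ ≤ ∑ _k : m, a * b := Finset.sum_le_sum fun k _ => by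
        rw [abs_mul]
        exact mul_le_mul (hA i k) (hB k j) (abs_nonneg _) ((abs_nonneg _).trans (hA i k))
    _ = Fintype.card m * (a * b) := by simp

theorem Matrix.abs_apply_le_one_of_mem_rowStochastic {I : Type*} [Fintype I] [DecidableEq I]
    {M : Matrix I I ℝ} (hM : M ∈ rowStochastic ℝ I) (i j : I) : |M i j| ≤ 1 :=
  abs_le.2 ⟨by linarith [nonneg_of_mem_rowStochastic hM (i := i) (j := j)],
    le_one_of_mem_rowStochastic hM⟩

theorem add_mul_one_sub_inv_mul_eq {m n : Type*} [Fintype n] [DecidableEq n]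
    {B : Matrix n m ℝ} {D : Matrix n n ℝ} (hD : ‖D‖ < 1) :
    B + D * ((1 - D)⁻¹ * B) = (1 - D)⁻¹ * B := by
  have : CompleteSpace (Matrix n n ℝ) := FiniteDimensional.complete ℝ _
  have hdet : IsUnit (1 - D).det :=
    (isUnit_iff_isUnit_det _).1 ⟨Units.oneSub D hD, Units.val_oneSub D hD⟩
  nth_rw 1 [← mul_nonsing_inv_cancel_left (1 - D) B hdet]
  rw [Matrix.sub_mul, Matrix.one_mul, sub_add_cancel]

section StubbornBlocks

variable {m n α : Type*} [Fintype m] [Fintype n] [DecidableEq m]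

theorem fromBlocks_one_zero_mul [Semiring α] (B B' : Matrix n m α) (D D' : Matrix n n α) :
    fromBlocks (1 : Matrix m m α) 0 B D * fromBlocks 1 0 B' D' =
      fromBlocks 1 0 (B + D * B') (D * D') := by
  simp [fromBlocks_multiply]

theorem fromBlocks_one_zero_pow [DecidableEq n] [Ring α] {B X : Matrix n m α} {D : Matrix n n α}
    (hX : B + D * X = X) (k : ℕ) :
    fromBlocks (1 : Matrix m m α) 0 B D ^ k = fromBlocks 1 0 (X - D ^ k * X) (D ^ k) := by
  induction k with
  | zero => simp [fromBlocks_one]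
  | succ k ih =>
    rw [pow_succ', ih, fromBlocks_one_zero_mul, pow_succ', Matrix.mul_sub, ← Matrix.mul_assoc,
      ← add_sub_assoc, hX]

theorem abs_fromBlocks_pow_sub_apply_le [DecidableEq n] {B X : Matrix n m ℝ} {D : Matrix n n ℝ}
    (hX : B + D * X = X) (k : ℕ) (a c : m ⊕ n) :
    |(fromBlocks (1 : Matrix m m ℝ) 0 B D ^ k - fromBlocks 1 0 X 0 :
        Matrix (m ⊕ n) (m ⊕ n) ℝ) a c| ≤ ‖D ^ k‖ * (‖X‖ + 1) := by
  rw [fromBlocks_one_zero_pow hX]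
  have hbound : 0 ≤ ‖D ^ k‖ * (‖X‖ + 1) := by positivity
  rcases a with i | i <;> rcases c with j | j
  · simpa using hbound
  · simpa using hbound
  · simpa using (abs_apply_le_l2_opNorm (D ^ k * X) i j).trans
      ((l2_opNorm_mul _ _).trans (by gcongr; linarith))
  · simpa using (abs_apply_le_l2_opNorm (D ^ k) i j).trans
      (le_mul_of_one_le_right (norm_nonneg _) (by linarith [norm_nonneg X]))

end StubbornBlocks

section Measurability

variable {α : Type*} [MeasurableSpace α] {l m n : Type*}

theorem Matrix.measurable_apply (i : m) (j : n) : Measurable fun M : Matrix m n ℝ => M i j :=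
  (measurable_pi_apply i).eval

theorem Measurable.matrix_mul [Fintype m] {f : α → Matrix l m ℝ} {g : α → Matrix m n ℝ}
    (hf : Measurable f) (hg : Measurable g) : Measurable fun x => f x * g x :=
  measurable_pi_lambda _ fun _ => measurable_pi_lambda _ fun _ =>
    Finset.measurable_sum _ fun _ _ => hf.eval.eval.mul hg.eval.eval

theorem Measurable.matrix_transpose {f : α → Matrix m n ℝ} (hf : Measurable f) :
    Measurable fun x => (f x)ᵀ :=
  measurable_pi_lambda _ fun _ => measurable_pi_lambda _ fun _ => hf.eval.eval

theorem Measurable.matrix_sub_const {f : α → Matrix m n ℝ} (hf : Measurable f)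
    (L : Matrix m n ℝ) : Measurable fun x => f x - L :=
  measurable_pi_lambda _ fun _ => measurable_pi_lambda _ fun _ => hf.eval.eval.sub_const _

end Measurability

section ProdSeq

variable {I : Type*} [Fintype I]

theorem prodSeq_congr {W W' : ℕ → Matrix I I ℝ} {s k : ℕ}
    (h : ∀ t ∈ Finset.Icc s (s + k), W t = W' t) : prodSeq W s k = prodSeq W' s k := by
  induction k with
  | zero => exact h s (by simp)
  | succ k ih =>
    simp only [prodSeq]
    rw [h _ (by simp; omega), ih fun t ht => h t (by simp at ht ⊢; omega)]

theorem prodSeq_add (W : ℕ → Matrix I I ℝ) (a b : ℕ) :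
    prodSeq W 0 (a + b + 1) = prodSeq W (a + 1) b * prodSeq W 0 a := by
  induction b with
  | zero => simp [prodSeq]
  | succ b ih =>
    rw [show a + (b + 1) + 1 = a + b + 1 + 1 by omega, prodSeq, ih, prodSeq, Matrix.mul_assoc]
    congr 3
    omega

theorem prodSeq_mem [DecidableEq I] {S : Submonoid (Matrix I I ℝ)} {W : ℕ → Matrix I I ℝ}
    (hW : ∀ t, W t ∈ S) (s : ℕ) : ∀ k, prodSeq W s k ∈ S
  | 0 => hW s
  | k + 1 => S.mul_mem (hW _) (prodSeq_mem hW s k)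

theorem mul_prodSeq_of_forall_mul_eq {L : Matrix I I ℝ} {W : ℕ → Matrix I I ℝ}
    (hL : ∀ t, L * W t = L) (s : ℕ) : ∀ k, L * prodSeq W s k = L
  | 0 => hL s
  | k + 1 => by rw [prodSeq, ← Matrix.mul_assoc, hL, mul_prodSeq_of_forall_mul_eq hL s k]

theorem measurable_prodSeq {α : Type*} [MeasurableSpace α] {W : ℕ → α → Matrix I I ℝ}
    (hW : ∀ t, Measurable (W t)) (s : ℕ) : ∀ k, Measurable fun x => prodSeq (fun t => W t x) s k
  | 0 => hW s
  | k + 1 => (hW _).matrix_mul (measurable_prodSeq hW s k)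

end ProdSeq

section Independence

variable {Ω : Type*} [MeasurableSpace Ω] {μ : Measure Ω} {I : Type*} [Fintype I]

theorem ProbabilityTheory.iIndepFun.indepFun_prodSeq {W : ℕ → Ω → Matrix I I ℝ}
    (hW : ∀ t, Measurable (W t)) (hind : iIndepFun W μ) {s k s' k' : ℕ} (h : s + k < s') :
    IndepFun (fun ω => prodSeq (fun t => W t ω) s' k') (fun ω => prodSeq (fun t => W t ω) s k)
      μ := by
  classical
  -- `prodSeq` over the window `[s, s + k]` only reads the family restricted to that window.
  let extend (S : Finset ℕ) (t : ℕ) (v : S → Matrix I I ℝ) : Matrix I I ℝ :=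
    if ht : t ∈ S then v ⟨t, ht⟩ else 0
  have hextend (S : Finset ℕ) (t : ℕ) : Measurable (extend S t) := by
    by_cases ht : t ∈ S
    · simpa [extend, ht] using measurable_pi_apply _
    · simp [extend, ht]
  have hdisj : Disjoint (Finset.Icc s' (s' + k')) (Finset.Icc s (s + k)) :=
    Finset.disjoint_left.2 fun t ht ht' => by
      simp only [Finset.mem_Icc] at ht ht'
      omega
  convert (hind.indepFun_finset _ _ hdisj hW).comp (measurable_prodSeq (hextend _) s' k')
    (measurable_prodSeq (hextend _) s k) using 1 <;>
  · funext ω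
    exact prodSeq_congr fun t ht => by simp [extend, ht]

variable {l m n o : Type*} [Fintype m]

theorem ProbabilityTheory.IndepFun.integral_mul_apply {Ψ : Ω → Matrix l m ℝ}
    {B : Ω → Matrix m n ℝ} (hind : IndepFun Ψ B μ) (hΨ : ∀ i a, Integrable (fun ω => Ψ ω i a) μ)
    (hB : ∀ a j, Integrable (fun ω => B ω a j) μ) {M : Matrix l m ℝ} {N : Matrix m n ℝ}
    (hM : ∀ i a, ∫ ω, Ψ ω i a ∂μ = M i a) (hN : ∀ a j, ∫ ω, B ω a j ∂μ = N a j) (i : l)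
    (j : n) : ∫ ω, (Ψ ω * B ω) i j ∂μ = (M * N) i j := by
  have hentry (a : m) : IndepFun (fun ω => Ψ ω i a) (fun ω => B ω a j) μ :=
    hind.comp (measurable_apply i a) (measurable_apply a j)
  have hint (a : m) : Integrable (fun ω => Ψ ω i a * B ω a j) μ :=
    (hentry a).integrable_mul (hΨ i a) (hB a j)
  simp only [mul_apply]
  rw [integral_finsetSum _ fun a _ => hint a]
  refine Finset.sum_congr rfl fun a _ => ?_
  rw [(hentry a).integral_fun_mul_eq_mul_integral (hΨ i a).1 (hB a j).1, hM, hN]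

theorem ProbabilityTheory.IndepFun.integral_mul_mul_apply [Fintype n] {A : Ω → Matrix l m ℝ}
    {Ψ : Ω → Matrix m n ℝ} {B : Ω → Matrix n o ℝ} (hind : IndepFun Ψ (fun ω => (A ω, B ω)) μ)
    (hΨ : ∀ a c, Integrable (fun ω => Ψ ω a c) μ) {i : l} {j : o}
    (hAB : ∀ a c, Integrable (fun ω => A ω i a * B ω c j) μ) {M : Matrix m n ℝ}
    (hM : ∀ a c, ∫ ω, Ψ ω a c ∂μ = M a c) :
    ∫ ω, (A ω * Ψ ω * B ω) i j ∂μ = ∫ ω, (A ω * M * B ω) i j ∂μ := by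
  have hentry (a : m) (c : n) :
      IndepFun (fun ω => Ψ ω a c) (fun ω => A ω i a * B ω c j) μ :=
    hind.comp (measurable_apply a c)
      (((measurable_apply i a).comp measurable_fst).mul
        ((measurable_apply c j).comp measurable_snd))
  have hexpand (N : Ω → Matrix m n ℝ) (ω : Ω) :
      (A ω * N ω * B ω) i j = ∑ c, ∑ a, N ω a c * (A ω i a * B ω c j) := by
    simp only [mul_apply, Finset.sum_mul]
    exact Finset.sum_congr rfl fun c _ => Finset.sum_congr rfl fun a _ => by ring
  have hint (a : m) (c : n) : Integrable (fun ω => Ψ ω a c * (A ω i a * B ω c j)) μ :=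
    (hentry a c).integrable_mul (hΨ a c) (hAB a c)
  simp only [hexpand Ψ, hexpand fun _ => M]
  rw [integral_finsetSum _ fun c _ => integrable_finsetSum _ fun a _ => hint a c,
    integral_finsetSum _ fun c _ => integrable_finsetSum _ fun a _ => (hAB a c).const_mul _]
  refine Finset.sum_congr rfl fun c _ => ?_
  rw [integral_finsetSum _ fun a _ => hint a c,
    integral_finsetSum _ fun a _ => (hAB a c).const_mul _]
  refine Finset.sum_congr rfl fun a _ => ?_
  rw [(hentry a c).integral_fun_mul_eq_mul_integral (hΨ a c).1 (hAB a c).1, hM,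
    integral_const_mul]

end Independence

section RandomProducts

variable {Ω : Type*} [MeasurableSpace Ω] {μ : Measure Ω} [IsProbabilityMeasure μ]
  {I : Type*} [Fintype I] [DecidableEq I] {W : ℕ → Ω → Matrix I I ℝ}

theorem integrable_prodSeq_apply (hstoch : ∀ t ω, W t ω ∈ rowStochastic ℝ I)
    (hW : ∀ t, Measurable (W t)) (s k : ℕ) (i j : I) :
    Integrable (fun ω => prodSeq (fun t => W t ω) s k i j) μ :=
  .of_bound (measurable_prodSeq hW s k).eval.eval.aestronglyMeasurable 1 <| ae_of_all _ fun ω =>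
    (Real.norm_eq_abs _).trans_le <|
      abs_apply_le_one_of_mem_rowStochastic (prodSeq_mem (hstoch · ω) s k) i j

theorem integral_prodSeq_apply (hstoch : ∀ t ω, W t ω ∈ rowStochastic ℝ I)
    (hW : ∀ t, Measurable (W t)) (hind : iIndepFun W μ) {Wbar : Matrix I I ℝ}
    (hmean : ∀ t i j, ∫ ω, W t ω i j ∂μ = Wbar i j) (s k : ℕ) (i j : I) :
    ∫ ω, prodSeq (fun t => W t ω) s k i j ∂μ = (Wbar ^ (k + 1)) i j := by
  induction k generalizing i j with
  | zero => rw [pow_one]; exact hmean s i j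
  | succ k ih =>
    rw [pow_succ']
    exact (hind.indepFun_prodSeq hW (k' := 0) (Nat.lt_succ_self (s + k))).integral_mul_apply
      (integrable_prodSeq_apply hstoch hW _ 0) (integrable_prodSeq_apply hstoch hW s k)
      (hmean _) ih i j

theorem integral_prodSeq_cross_apply (hstoch : ∀ t ω, W t ω ∈ rowStochastic ℝ I)
    (hW : ∀ t, Measurable (W t)) (hind : iIndepFun W μ) {Wbar : Matrix I I ℝ}
    (hmean : ∀ t i j, ∫ ω, W t ω i j ∂μ = Wbar i j) {L : Matrix I I ℝ}
    (hL : ∀ t ω, L * W t ω = L) (t b : ℕ) (k l : I) :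
    ∫ ω, ((prodSeq (fun u => W u ω) 0 (t + b + 1) - L)ᵀ *
        (prodSeq (fun u => W u ω) 0 t - L)) k l ∂μ =
      ∫ ω, ((prodSeq (fun u => W u ω) 0 t)ᵀ * (Wbar ^ (b + 1) - L)ᵀ *
        (prodSeq (fun u => W u ω) 0 t - L)) k l ∂μ := by
  set Φ := fun ω => prodSeq (fun u => W u ω) 0 t
  set Ψ := fun ω => prodSeq (fun u => W u ω) (t + 1) b
  have hfactor (ω : Ω) :
      (prodSeq (fun u => W u ω) 0 (t + b + 1) - L)ᵀ = (Φ ω)ᵀ * (Ψ ω - L)ᵀ := by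
    rw [prodSeq_add, ← transpose_mul, sub_mul, mul_prodSeq_of_forall_mul_eq (hL · ω)]
  simp only [hfactor]
  have hΨΦ : IndepFun Ψ Φ μ := hind.indepFun_prodSeq hW (by omega)
  have hindep := hΨΦ.comp (measurable_id.matrix_sub_const L).matrix_transpose
    (measurable_id.matrix_transpose.prodMk (measurable_id.matrix_sub_const L))
  refine hindep.integral_mul_mul_apply (fun a c => ?_) (fun a c => ?_) (fun a c => ?_)
  · exact (integrable_prodSeq_apply hstoch hW _ b c a).sub (integrable_const _)
  · exact ((integrable_prodSeq_apply hstoch hW 0 t c l).sub (integrable_const _)).bdd_mul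
      (measurable_prodSeq hW 0 t).eval.eval.aestronglyMeasurable (c := 1) <| ae_of_all _ fun ω =>
        (Real.norm_eq_abs _).trans_le <|
          abs_apply_le_one_of_mem_rowStochastic (prodSeq_mem (hstoch · ω) 0 t) a k
  · simp [integral_sub (integrable_prodSeq_apply hstoch hW _ b c a) (integrable_const _),
      Ψ, integral_prodSeq_apply hstoch hW hind hmean]

end RandomProducts

theorem stmt14_general (ns p : ℕ) {Ω : Type*} [MeasurableSpace Ω] (μ : Measure Ω)
    [IsProbabilityMeasure μ]
    (W : ℕ → Ω → Matrix (Fin ns ⊕ Fin p) (Fin ns ⊕ Fin p) ℝ)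
    (Bt : ℕ → Ω → Matrix (Fin p) (Fin ns) ℝ) (Dt : ℕ → Ω → Matrix (Fin p) (Fin p) ℝ)
    (hblock : ∀ t ω, W t ω = Matrix.fromBlocks 1 0 (Bt t ω) (Dt t ω))
    (hWpos : ∀ t ω i j, 0 ≤ W t ω i j) (hWrow : ∀ t ω i, ∑ j, W t ω i j = 1)
    (hmeas : ∀ t, Measurable (W t))
    (hindep : iIndepFun W μ)
    (Wbar : Matrix (Fin ns ⊕ Fin p) (Fin ns ⊕ Fin p) ℝ)
    (hmean : ∀ t i j, ∫ ω, W t ω i j ∂μ = Wbar i j)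
    (Bbar : Matrix (Fin p) (Fin ns) ℝ) (Dbar : Matrix (Fin p) (Fin p) ℝ)
    (hWbar : Wbar = Matrix.fromBlocks 1 0 Bbar Dbar)
    (lam : ℝ) (hlam : lam = ‖Dbar‖) (hlt : lam < 1)
    (Winf : Matrix (Fin ns ⊕ Fin p) (Fin ns ⊕ Fin p) ℝ)
    (hWinf : Winf = Matrix.fromBlocks 1 0 ((1 - Dbar)⁻¹ * Bbar) 0) :
    ∃ C : ℝ, 0 ≤ C ∧ ∀ ti tj : ℕ, ti < tj → ∀ k l,
      |∫ ω, ((prodSeq (fun u => W u ω) 0 tj - Winf)ᵀ *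
              (prodSeq (fun u => W u ω) 0 ti - Winf)) k l ∂μ| ≤
        C * lam ^ (tj - ti) := by
  set X := (1 - Dbar)⁻¹ * Bbar
  have hX : Bbar + Dbar * X = X := add_mul_one_sub_inv_mul_eq (hlam ▸ hlt)
  have hstoch (t : ℕ) (ω : Ω) : W t ω ∈ rowStochastic ℝ _ :=
    mem_rowStochastic_iff_sum.2 ⟨hWpos t ω, hWrow t ω⟩
  have habsorb (t : ℕ) (ω : Ω) : Winf * W t ω = Winf := by
    simp [hWinf, hblock, fromBlocks_one_zero_mul]
  set N : ℝ := (Fintype.card (Fin ns ⊕ Fin p) : ℝ)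
  refine ⟨N ^ 2 * (‖X‖ + 1) * (1 + ‖Winf‖), by positivity, fun ti tj hij k l => ?_⟩
  obtain ⟨b, rfl⟩ : ∃ b, tj = ti + b + 1 := ⟨tj - ti - 1, by omega⟩
  rw [integral_prodSeq_cross_apply hstoch hmeas hindep hmean habsorb,
    show ti + b + 1 - ti = b + 1 by omega]
  set Φ := fun ω => prodSeq (fun u => W u ω) 0 ti
  have hΦ (ω : Ω) (a c) : |(Φ ω)ᵀ a c| ≤ 1 :=
    abs_apply_le_one_of_mem_rowStochastic (prodSeq_mem (hstoch · ω) 0 ti) c a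
  have hG (ω : Ω) (a c) : |(Φ ω - Winf) a c| ≤ 1 + ‖Winf‖ :=
    (abs_sub _ _).trans (add_le_add (hΦ ω c a) (abs_apply_le_l2_opNorm _ a c))
  have hE (a c) : |(Wbar ^ (b + 1) - Winf)ᵀ a c| ≤ lam ^ (b + 1) * (‖X‖ + 1) := by
    refine (hWbar ▸ hWinf ▸ abs_fromBlocks_pow_sub_apply_le hX (b + 1) c a).trans ?_
    gcongr
    exact hlam ▸ norm_pow_le' Dbar b.succ_pos
  calc _ ≤ N * (N * (1 * (lam ^ (b + 1) * (‖X‖ + 1))) * (1 + ‖Winf‖)) := by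
        simpa only [Real.norm_eq_abs, probReal_univ, mul_one] using
          norm_integral_le_of_norm_le_const (μ := μ) <| ae_of_all _ fun ω =>
            (Real.norm_eq_abs _).trans_le <|
              abs_mul_apply_le (abs_mul_apply_le (hΦ ω) hE) (hG ω) k l
    _ = _ := by ring

/-- For i.i.d. random row-stochastic matrices `W(t) = [[I, 0], [B(t), D(t)]]` with mean
`W̄`, `λ = ‖D̄‖₂ < 1` and `W̄^∞ = [[I, 0], [(I − D̄)⁻¹B̄, 0]]`, the cross-covariances of
the products `Φ(0,t) = W(t)⋯W(0)` decay geometrically: for `t_i < t_j`,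
`‖E[(Φ(0,t_j) − W̄^∞)ᵀ(Φ(0,t_i) − W̄^∞)]‖ ≤ C λ^{t_j − t_i}` for a constant `C < ∞`. -/
theorem stmt14 (ns p : ℕ) {Ω : Type*} [MeasurableSpace Ω] (μ : Measure Ω)
    [IsProbabilityMeasure μ]
    (W : ℕ → Ω → Matrix (Fin ns ⊕ Fin p) (Fin ns ⊕ Fin p) ℝ)
    (Bt : ℕ → Ω → Matrix (Fin p) (Fin ns) ℝ) (Dt : ℕ → Ω → Matrix (Fin p) (Fin p) ℝ)
    (hblock : ∀ t ω, W t ω = Matrix.fromBlocks 1 0 (Bt t ω) (Dt t ω))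
    (hWpos : ∀ t ω i j, 0 ≤ W t ω i j) (hWrow : ∀ t ω i, ∑ j, W t ω i j = 1)
    (hmeas : ∀ t, Measurable (W t))
    (hindep : iIndepFun W μ)
    (hident : ∀ s t, IdentDistrib (W s) (W t) μ μ)
    (Wbar : Matrix (Fin ns ⊕ Fin p) (Fin ns ⊕ Fin p) ℝ)
    (hmean : ∀ t i j, ∫ ω, W t ω i j ∂μ = Wbar i j)
    (Bbar : Matrix (Fin p) (Fin ns) ℝ) (Dbar : Matrix (Fin p) (Fin p) ℝ)
    (hWbar : Wbar = Matrix.fromBlocks 1 0 Bbar Dbar)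
    (lam : ℝ) (hlam : lam = ‖Dbar‖) (hlt : lam < 1)
    (Winf : Matrix (Fin ns ⊕ Fin p) (Fin ns ⊕ Fin p) ℝ)
    (hWinf : Winf = Matrix.fromBlocks 1 0 ((1 - Dbar)⁻¹ * Bbar) 0) :
    ∃ C : ℝ, 0 ≤ C ∧ ∀ ti tj : ℕ, ti < tj → ∀ k l,
      |∫ ω, ((prodSeq (fun u => W u ω) 0 tj - Winf)ᵀ *
              (prodSeq (fun u => W u ω) 0 ti - Winf)) k l ∂μ| ≤
        C * lam ^ (tj - ti) :=
  stmt14_general ns p μ W Bt Dt hblock hWpos hWrow hmeas hindep Wbar hmean Bbar Dbar hWbar lam hlam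
    hlt Winf hWinf
end
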